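/- arXiv:math/0212265 — 3 statements merged into one kernel-verified Lean document; each statement's English description precedes it below -/
import Mathlib

section
/- Let a₁,…,a_r be self-adjoint m×m complex matrices and w₁,…,w_r be n×n complex matrices. Then ‖Σᵢ aᵢ ⊗ wᵢ‖₂ ≤ m^{1/2} · ‖Σᵢ aᵢ²‖^{1/2} · (Σᵢ ‖wᵢ‖₂²)^{1/2}, where ‖·‖₂ denotes the Hilbert–Schmidt norm with respect to the unnormalized traces and ‖Σᵢ aᵢ²‖ is the operator norm. -/
/-!
Identify `hsNorm` with the Frobenius norm, which is multiplicative on Kronecker products. The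
triangle inequality and Cauchy–Schwarz then give
`‖Σᵢ aᵢ ⊗ wᵢ‖₂ ≤ Σᵢ ‖aᵢ‖₂ ‖wᵢ‖₂ ≤ (Σᵢ ‖aᵢ‖₂²)^{1/2} (Σᵢ ‖wᵢ‖₂²)^{1/2}`, and for self-adjoint `aᵢ`,
`Σᵢ ‖aᵢ‖₂² = Tr (Σᵢ aᵢ²) ≤ m ‖Σᵢ aᵢ²‖` since each diagonal entry of a matrix is bounded by its
operator norm.
-/

open scoped Kronecker

/-- The Hilbert–Schmidt norm `‖T‖₂ = (Tr(T*T))^{1/2}` of a complex matrix, with respect to the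
unnormalized trace. -/
noncomputable def hsNorm {K : Type*} [Fintype K] (T : Matrix K K ℂ) : ℝ :=
  Real.sqrt (Matrix.trace (T.conjTranspose * T)).re

open scoped Matrix

namespace Matrix

section Frobenius

attribute [local instance] frobeniusSeminormedAddCommGroup

variable {l m n p α : Type*} [Fintype l] [Fintype m] [Fintype n] [Fintype p]

theorem frobenius_norm_sq_eq_sum [SeminormedAddCommGroup α] (A : Matrix m n α) :
    ‖A‖ ^ 2 = ∑ i, ∑ j, ‖A i j‖ ^ 2 := by
  change ‖WithLp.toLp 2 fun i => WithLp.toLp 2 (A i)‖ ^ 2 = _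
  simp only [PiLp.norm_sq_eq_of_L2]

theorem frobenius_norm_kronecker [SeminormedRing α] [NormMulClass α]
    (A : Matrix l m α) (B : Matrix n p α) : ‖A ⊗ₖ B‖ = ‖A‖ * ‖B‖ := by
  refine (sq_eq_sq₀ (norm_nonneg _) (by positivity)).1 ?_
  simp only [mul_pow, frobenius_norm_sq_eq_sum, Fintype.sum_prod_type, kroneckerMap_apply,
    norm_mul, Finset.sum_mul_sum]

theorem frobenius_norm_sq_eq_re_trace {𝕜 : Type*} [RCLike 𝕜] (A : Matrix m n 𝕜) :
    ‖A‖ ^ 2 = RCLike.re (trace (Aᴴ * A)) := by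
  simp [frobenius_norm_sq_eq_sum, trace, mul_apply, RCLike.conj_mul, Finset.sum_comm (γ := m)]

end Frobenius

theorem re_trace_le_card_mul_norm_toEuclideanCLM {𝕜 n : Type*} [RCLike 𝕜] [Fintype n]
    [DecidableEq n] (B : Matrix n n 𝕜) :
    RCLike.re (trace B) ≤ Fintype.card n * ‖toEuclideanCLM (n := n) (𝕜 := 𝕜) B‖ := by
  set T := toEuclideanCLM (n := n) (𝕜 := 𝕜) B
  have diag_le (i : n) : RCLike.re (B i i) ≤ ‖T‖ := by
    have hBi : B i i = T (EuclideanSpace.single i 1) i := by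
      simp [T, ofLp_toEuclideanCLM, mulVec_single]
    calc RCLike.re (B i i) ≤ ‖B i i‖ := RCLike.re_le_norm _
      _ ≤ ‖T (EuclideanSpace.single i 1)‖ := hBi ▸ PiLp.norm_apply_le _ i
      _ ≤ ‖T‖ := by simpa using T.le_opNorm (EuclideanSpace.single i 1)
  simpa [trace] using Finset.sum_le_sum fun i (_ : i ∈ Finset.univ) => diag_le i

end Matrix

section HilbertSchmidt

attribute [local instance] Matrix.frobeniusSeminormedAddCommGroup

variable {K L : Type*} [Fintype K] [Fintype L]

theorem hsNorm_eq_frobenius_norm (T : Matrix K K ℂ) : hsNorm T = ‖T‖ := by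
  rw [hsNorm, ← RCLike.re_to_complex, ← Matrix.frobenius_norm_sq_eq_re_trace,
    Real.sqrt_sq (norm_nonneg T)]

theorem hsNorm_sq (T : Matrix K K ℂ) : hsNorm T ^ 2 = (Matrix.trace (Tᴴ * T)).re := by
  rw [hsNorm_eq_frobenius_norm, Matrix.frobenius_norm_sq_eq_re_trace, RCLike.re_to_complex]

theorem hsNorm_kronecker (A : Matrix K K ℂ) (B : Matrix L L ℂ) :
    hsNorm (A ⊗ₖ B) = hsNorm A * hsNorm B := by
  simp only [hsNorm_eq_frobenius_norm, Matrix.frobenius_norm_kronecker]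

theorem hsNorm_sum_le {ι : Type*} (s : Finset ι) (T : ι → Matrix K K ℂ) :
    hsNorm (∑ i ∈ s, T i) ≤ ∑ i ∈ s, hsNorm (T i) := by
  simpa only [hsNorm_eq_frobenius_norm] using norm_sum_le s T

end HilbertSchmidt

theorem sum_hsNorm_sq_le_of_isHermitian {ι K : Type*} [Fintype ι] [Fintype K] [DecidableEq K]
    (a : ι → Matrix K K ℂ) (ha : ∀ i, (a i).IsHermitian) :
    ∑ i, hsNorm (a i) ^ 2 ≤
      Fintype.card K * ‖Matrix.toEuclideanCLM (n := K) (𝕜 := ℂ) (∑ i, a i * a i)‖ := by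
  have hsum : ∑ i, hsNorm (a i) ^ 2 = RCLike.re (Matrix.trace (∑ i, a i * a i)) := by
    rw [Matrix.trace_sum, map_sum]
    refine Finset.sum_congr rfl fun i _ => ?_
    rw [hsNorm_sq, (ha i).eq, RCLike.re_to_complex]
  exact hsum ▸ Matrix.re_trace_le_card_mul_norm_toEuclideanCLM (∑ i, a i * a i)

/-- For self-adjoint `m×m` matrices `a₁,…,a_r` and `n×n` matrices `w₁,…,w_r`,
`‖Σᵢ aᵢ ⊗ wᵢ‖₂ ≤ m^{1/2} ‖Σᵢ aᵢ²‖^{1/2} (Σᵢ ‖wᵢ‖₂²)^{1/2}`, where `‖·‖₂` is the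
Hilbert–Schmidt norm (unnormalized traces) and `‖Σᵢ aᵢ²‖` the operator norm. -/
theorem stmt6 (m n r : ℕ)
    (a : Fin r → Matrix (Fin m) (Fin m) ℂ) (w : Fin r → Matrix (Fin n) (Fin n) ℂ)
    (ha : ∀ i, (a i).IsHermitian) :
    hsNorm (∑ i, a i ⊗ₖ w i) ≤
      Real.sqrt m * Real.sqrt ‖Matrix.toEuclideanCLM (𝕜 := ℂ) (∑ i, a i * a i)‖ *
        Real.sqrt (∑ i, hsNorm (w i) ^ 2) := by
  calc hsNorm (∑ i, a i ⊗ₖ w i)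
      ≤ ∑ i, hsNorm (a i) * hsNorm (w i) := by
        simpa only [hsNorm_kronecker] using hsNorm_sum_le Finset.univ fun i => a i ⊗ₖ w i
    _ ≤ Real.sqrt (∑ i, hsNorm (a i) ^ 2) * Real.sqrt (∑ i, hsNorm (w i) ^ 2) :=
        Real.sum_mul_le_sqrt_mul_sqrt _ _ _
    _ ≤ _ := by
        rw [← Real.sqrt_mul (Nat.cast_nonneg m)]
        gcongr
        simpa using sum_hsNorm_sq_le_of_isHermitian a ha
end

section
/- Let N be a positive integer, I an open real interval, a : I → M_N(ℂ) a C¹ function taking self-adjoint values, and φ ∈ C¹(ℝ). Then t ↦ tr_N[φ(a(t))] is C¹ on I and (d/dt) tr_N[φ(a(t))] = tr_N[φ'(a(t)) · a'(t)], where φ(a(t)) and φ'(a(t)) are defined by the continuous functional calculus and tr_N is the normalized trace. -/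
/-!
Write `τ` for a continuous tracial functional. For a polynomial `p`, differentiating `a ^ k` gives
`∑ a ^ i * a' * a ^ (k - 1 - i)`, and the trace property turns every term into
`τ (a ^ (k - 1) * a')`, so `τ (p (a s))` has derivative `τ (p' (a s) * a')`. For `φ ∈ C¹`,
approximate `φ'` uniformly by polynomials on an interval containing the spectra of `a s` for `s`
near `t` and integrate them, so that `p_n → φ` and `p_n' → φ'` uniformly there. In a C⋆-algebra
the functional calculus is isometric, so `p_n (a s) → φ (a s)` and `p_n' (a s) → φ' (a s)`
uniformly in `s`, and uniform convergence of derivatives passes the formula to the limit.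
Matrices, whose entrywise norm is not a C⋆-norm, are transported to operators on
`EuclideanSpace ℂ n`.
-/

open Polynomial Set Filter Topology

theorem Polynomial.exists_derivative_eq {K : Type*} [Field K] [CharZero K] (q : K[X]) :
    ∃ p : K[X], derivative p = q := by
  induction q using Polynomial.induction_on' with
  | add q r hq hr =>
    obtain ⟨p, rfl⟩ := hq
    obtain ⟨p', rfl⟩ := hr
    exact ⟨p + p', map_add _ _ _⟩
  | monomial n c =>
    refine ⟨monomial (n + 1) (c / (n + 1)), ?_⟩
    rw [derivative_monomial, Nat.add_sub_cancel]
    congr 1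
    push_cast
    field_simp

theorem tendstoUniformlyOn_Icc_of_tendstoUniformlyOn_deriv {ι E : Type*} [NormedAddCommGroup E]
    [NormedSpace ℝ E] {l : Filter ι} {a b : ℝ} {f f' : ι → ℝ → E} {g g' : ℝ → E}
    (hf : ∀ n, ∀ x ∈ Icc a b, HasDerivWithinAt (f n) (f' n x) (Icc a b) x)
    (hg : ∀ x ∈ Icc a b, HasDerivWithinAt g (g' x) (Icc a b) x)
    (hf' : TendstoUniformlyOn f' g' l (Icc a b)) (hfa : ∀ n, f n a = g a) :
    TendstoUniformlyOn f g l (Icc a b) := by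
  rw [Metric.tendstoUniformlyOn_iff] at hf' ⊢
  intro ε hε
  have hC : 0 < |b - a| + 1 := by positivity
  filter_upwards [hf' _ (div_pos hε hC)] with n hn x hx
  have hmvt := (convex_Icc a b).norm_image_sub_le_of_norm_hasDerivWithin_le
    (fun y hy => (hg y hy).sub (hf n y hy)) (fun y hy => (dist_eq_norm (g' y) _ ▸ hn y hy).le)
    (left_mem_Icc.2 (hx.1.trans hx.2)) hx
  rw [Pi.sub_apply, Pi.sub_apply, hfa, sub_self, sub_zero, ← dist_eq_norm,
    Real.norm_of_nonneg (sub_nonneg.2 hx.1)] at hmvt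
  have hxa : x - a < |b - a| + 1 := by linarith [le_abs_self (b - a), hx.2]
  calc dist (g x) (f n x) ≤ ε / (|b - a| + 1) * (x - a) := hmvt
    _ < ε / (|b - a| + 1) * (|b - a| + 1) := by gcongr
    _ = ε := div_mul_cancel₀ ε hC.ne'

theorem exists_polynomial_tendstoUniformlyOn_Icc_of_contDiff {φ : ℝ → ℝ} (hφ : ContDiff ℝ 1 φ)
    (a b : ℝ) :
    ∃ p : ℕ → ℝ[X], TendstoUniformlyOn (fun n x => (p n).eval x) φ atTop (Icc a b) ∧
      TendstoUniformlyOn (fun n x => (derivative (p n)).eval x) (deriv φ) atTop (Icc a b) := by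
  have hφ' := (hφ.continuous_deriv le_rfl).continuousOn (s := Icc a b)
  choose q hq using fun n : ℕ =>
    exists_polynomial_near_of_continuousOn a b _ hφ' (1 / (n + 1)) Nat.one_div_pos_of_nat
  choose P hP using fun n => (q n).exists_derivative_eq
  set p := fun n => P n + C (φ a - (P n).eval a)
  have hp : ∀ n, derivative (p n) = q n := by simp [p, hP]
  have hq' : TendstoUniformlyOn (fun n x => (q n).eval x) (deriv φ) atTop (Icc a b) := by
    rw [Metric.tendstoUniformlyOn_iff]
    intro ε hε
    filter_upwards [tendsto_one_div_add_atTop_nhds_zero_nat.eventually (gt_mem_nhds hε)]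
      with n hn x hx
    rw [dist_comm, Real.dist_eq]
    exact (hq n x hx).trans hn
  refine ⟨p, tendstoUniformlyOn_Icc_of_tendstoUniformlyOn_deriv (f' := fun n x => (q n).eval x)
    (fun n x _ => ?_) (fun x _ => ?_) hq' fun n => by simp [p], by simpa only [hp] using hq'⟩
  · exact hp n ▸ ((p n).hasDerivAt x).hasDerivWithinAt
  · exact ((hφ.differentiable one_ne_zero) x).hasDerivAt.hasDerivWithinAt

theorem HasDerivAt.map_aeval_of_map_mul_comm {𝔸 E : Type*} [NormedRing 𝔸] [NormedAlgebra ℝ 𝔸]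
    [NormedAddCommGroup E] [NormedSpace ℝ E] (τ : 𝔸 →L[ℝ] E) (hτ : ∀ x y, τ (x * y) = τ (y * x))
    {a : ℝ → 𝔸} {a' : 𝔸} {t : ℝ} (ha : HasDerivAt a a' t) (p : ℝ[X]) :
    HasDerivAt (fun s => τ (aeval (a s) p)) (τ (aeval (a t) (derivative p) * a')) t := by
  induction p using Polynomial.induction_on' with
  | add p q hp hq => simpa only [map_add, add_mul] using hp.fun_add hq
  | monomial n c =>
    have hpow : τ (∑ i ∈ Finset.range n, a t ^ (n.pred - i) * a' * a t ^ i) =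
        (n : ℝ) • τ (a t ^ (n - 1) * a') := by
      rw [map_sum, Finset.sum_congr rfl (g := fun _ => τ (a t ^ (n - 1) * a')), Finset.sum_const,
        Finset.card_range, Nat.cast_smul_eq_nsmul]
      intro i hi
      rw [hτ, ← mul_assoc, ← pow_add, Nat.pred_eq_sub_one,
        Nat.add_sub_of_le (Nat.le_sub_one_of_lt (Finset.mem_range.mp hi))]
    have h := (τ.hasFDerivAt.comp_hasDerivAt t (ha.fun_pow' n)).const_smul c
    simp only [aeval_monomial, derivative_monomial, ← Algebra.smul_def, smul_mul_assoc, map_smul]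
    convert h using 1
    · rfl
    · rw [hpow, smul_smul, mul_comm c]

theorem tendstoUniformlyOnFilter_map_cfc_mul {A E ι X : Type*} [CStarAlgebra A]
    [NormedAddCommGroup E] [NormedSpace ℝ E] (τ : A →L[ℝ] E) {l : Filter ι} {l' : Filter X}
    {F : ι → ℝ → ℝ} {f : ℝ → ℝ} {K : Set ℝ} (hF : TendstoUniformlyOn F f l K)
    (hFc : ∀ n, ContinuousOn (F n) K) (hfc : ContinuousOn f K) {a b : X → A}
    (ha : ∀ᶠ x in l', spectrum ℝ (a x) ⊆ K) {M : ℝ}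
    (hb : ∀ᶠ x in l', ‖b x‖ ≤ M) :
    TendstoUniformlyOnFilter (fun n x => τ (cfc (F n) (a x) * b x))
      (fun x => τ (cfc f (a x) * b x)) l l' := by
  rw [Metric.tendstoUniformlyOnFilter_iff]
  intro ε hε
  have hC : 0 < (‖τ‖ + 1) * (|M| + 1) := by positivity
  filter_upwards [(Metric.tendstoUniformlyOn_iff.1 hF _ (div_pos hε hC)).prod_mk (ha.and hb)]
    with ⟨n, x⟩ ⟨hn, hK, hbx⟩
  have hcfc : ‖cfc f (a x) - cfc (F n) (a x)‖ ≤ ε / ((‖τ‖ + 1) * (|M| + 1)) := by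
    rw [← cfc_sub f (F n) (a x) (hfc.mono hK) ((hFc n).mono hK)]
    exact norm_cfc_le (by positivity) fun y hy => (hn y (hK hy)).le
  calc dist (τ (cfc f (a x) * b x)) (τ (cfc (F n) (a x) * b x))
      = ‖τ ((cfc f (a x) - cfc (F n) (a x)) * b x)‖ := by rw [dist_eq_norm, ← map_sub, sub_mul]
    _ ≤ ‖τ‖ * (‖cfc f (a x) - cfc (F n) (a x)‖ * ‖b x‖) :=
      (τ.le_opNorm _).trans (by gcongr; exact norm_mul_le _ _)
    _ ≤ ‖τ‖ * (ε / ((‖τ‖ + 1) * (|M| + 1)) * |M|) := by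
      gcongr
      exact hbx.trans (le_abs_self M)
    _ = ε * (‖τ‖ * |M|) / ((‖τ‖ + 1) * (|M| + 1)) := by ring
    _ < ε := by
      rw [div_lt_iff₀ hC]
      exact mul_lt_mul_of_pos_left (by nlinarith [norm_nonneg τ, abs_nonneg M]) hε

theorem hasDerivAt_map_cfc_of_map_mul_comm {A E : Type*} [CStarAlgebra A] [NormedAddCommGroup E]
    [NormedSpace ℝ E] (τ : A →L[ℝ] E) (hτ : ∀ x y, τ (x * y) = τ (y * x)) {a a' : ℝ → A}
    {t : ℝ} (ha : ∀ᶠ s in 𝓝 t, HasDerivAt a (a' s) s) (hsa : ∀ᶠ s in 𝓝 t, IsSelfAdjoint (a s))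
    (ha' : ContinuousAt a' t) {φ : ℝ → ℝ} (hφ : ContDiff ℝ 1 φ) :
    HasDerivAt (fun s => τ (cfc φ (a s))) (τ (cfc (deriv φ) (a t) * a' t)) t := by
  set R := (‖a t‖ + 1) * ‖(1 : A)‖
  have hspec : ∀ᶠ s in 𝓝 t, spectrum ℝ (a s) ⊆ Icc (-R) R := by
    filter_upwards [ha.self_of_nhds.continuousAt.norm.eventually (gt_mem_nhds (lt_add_one _))]
      with s hlt x hx
    refine abs_le.1 ?_
    have hx := spectrum.subset_closedBall_norm_mul (𝕜 := ℝ) (a s) hx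
    rw [Metric.mem_closedBall, Real.dist_0_eq_abs] at hx
    exact hx.trans (mul_le_mul_of_nonneg_right hlt.le (norm_nonneg _))
  have hbdd : ∀ᶠ s in 𝓝 t, ‖a' s‖ ≤ ‖a' t‖ + 1 :=
    (ha'.norm.eventually (gt_mem_nhds (lt_add_one _))).mono fun _ => le_of_lt
  obtain ⟨p, hp, hp'⟩ := exists_polynomial_tendstoUniformlyOn_Icc_of_contDiff hφ (-R) R
  refine hasDerivAt_of_tendstoUniformlyOnFilter (l := atTop)
    (f := fun n s => τ (aeval (a s) (p n)))
    (f' := fun n s => τ (aeval (a s) (derivative (p n)) * a' s))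
    (g' := fun s => τ (cfc (deriv φ) (a s) * a' s)) ?_ ?_ ?_
  · refine (tendstoUniformlyOnFilter_map_cfc_mul τ hp'
      (fun n => (derivative (p n)).continuous.continuousOn)
      (hφ.continuous_deriv le_rfl).continuousOn hspec hbdd).congr ?_
    filter_upwards [hsa.prod_inr _] with ⟨n, s⟩ hs
    rw [cfc_polynomial _ _ hs]
  · filter_upwards [ha.prod_inr _] with ⟨n, s⟩ hs using hs.map_aeval_of_map_mul_comm τ hτ (p n)
  · filter_upwards [hsa, hspec] with s hs hK
    simp only [← cfc_polynomial (p _) (a s) hs]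
    exact (τ.continuous.tendsto _).comp
      (tendsto_cfc_fun (hp.mono hK) (Eventually.of_forall fun n => (p n).continuous.continuousOn))

attribute [local instance] Matrix.normedAddCommGroup Matrix.normedSpace

namespace Matrix

variable {n : Type*} [Fintype n] [DecidableEq n]

noncomputable def toEuclideanCLML :
    Matrix n n ℂ ≃L[ℂ] (EuclideanSpace ℂ n →L[ℂ] EuclideanSpace ℂ n) :=
  (toEuclideanCLM (𝕜 := ℂ)).toAlgEquiv.toLinearEquiv.toContinuousLinearEquiv

@[simp]
theorem coe_toEuclideanCLML_symm :
    ⇑(toEuclideanCLML (n := n)).symm = (toEuclideanCLM (𝕜 := ℂ)).symm := rfl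

noncomputable def euclideanTrace : (EuclideanSpace ℂ n →L[ℂ] EuclideanSpace ℂ n) →L[ℂ] ℂ :=
  (traceLinearMap n ℂ ℂ).toContinuousLinearMap ∘L toEuclideanCLML.symm.toContinuousLinearMap

theorem trace_eq_euclideanTrace (M : Matrix n n ℂ) :
    trace M = euclideanTrace (toEuclideanCLM (𝕜 := ℂ) M) := by
  simp [euclideanTrace]

theorem euclideanTrace_mul_comm (x y : EuclideanSpace ℂ n →L[ℂ] EuclideanSpace ℂ n) :
    euclideanTrace (x * y) = euclideanTrace (y * x) := by
  simp only [euclideanTrace, ContinuousLinearMap.comp_apply, ContinuousLinearEquiv.coe_coe,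
    coe_toEuclideanCLML_symm, map_mul, LinearMap.coe_toContinuousLinearMap', traceLinearMap_apply]
  exact trace_mul_comm _ _

theorem IsHermitian.toEuclideanCLM_cfc {M : Matrix n n ℂ} (hM : M.IsHermitian) {f : ℝ → ℝ}
    (hf : Continuous f) : toEuclideanCLM (𝕜 := ℂ) (cfc f M) = cfc f (toEuclideanCLM (𝕜 := ℂ) M) :=
  StarAlgHomClass.map_cfc (toEuclideanCLM (𝕜 := ℂ)) f M hf.continuousOn
    toEuclideanCLML.continuous hM.isSelfAdjoint (hM.isSelfAdjoint.map _)

theorem hasDerivAt_trace_cfc {A A' : ℝ → Matrix n n ℂ} {t : ℝ}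
    (hA : ∀ᶠ s in 𝓝 t, HasDerivAt A (A' s) s) (hherm : ∀ᶠ s in 𝓝 t, (A s).IsHermitian)
    (hA' : ContinuousAt A' t) {φ : ℝ → ℝ} (hφ : ContDiff ℝ 1 φ) :
    HasDerivAt (fun s => trace (cfc φ (A s))) (trace (cfc (deriv φ) (A t) * A' t)) t := by
  have key := hasDerivAt_map_cfc_of_map_mul_comm (euclideanTrace.restrictScalars ℝ)
    euclideanTrace_mul_comm (a := fun s => toEuclideanCLM (𝕜 := ℂ) (A s))
    (a' := fun s => toEuclideanCLM (𝕜 := ℂ) (A' s))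
    (hA.mono fun s hs => ((toEuclideanCLML (n := n)).toContinuousLinearMap.restrictScalars ℝ
      |>.hasFDerivAt.comp_hasDerivAt s hs))
    (hherm.mono fun s hs => hs.isSelfAdjoint.map _)
    (toEuclideanCLML.continuous.continuousAt.comp hA') hφ
  rw [ContinuousLinearMap.coe_restrictScalars', ← hherm.self_of_nhds.toEuclideanCLM_cfc
    (hφ.continuous_deriv le_rfl), ← map_mul, ← trace_eq_euclideanTrace] at key
  refine key.congr_of_eventuallyEq (hherm.mono fun s hs => ?_)
  simp only [← hs.toEuclideanCLM_cfc hφ.continuous, ← trace_eq_euclideanTrace]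

end Matrix

theorem ContinuousOn.matrix_cfc {n X : Type*} [Fintype n] [DecidableEq n] [TopologicalSpace X]
    {A : X → Matrix n n ℂ} {U : Set X} (hA : ContinuousOn A U)
    (hherm : ∀ x ∈ U, (A x).IsHermitian) {f : ℝ → ℝ} (hf : Continuous f) :
    ContinuousOn (fun x => cfc f (A x)) U := by
  have h := ContinuousOn.cfc_of_mem_nhdsSet f (a := fun x => Matrix.toEuclideanCLM (𝕜 := ℂ) (A x))
    univ_mem (Matrix.toEuclideanCLML.continuous.comp_continuousOn hA)
    (fun x hx => (hherm x hx).isSelfAdjoint.map _)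
  refine (Matrix.toEuclideanCLML.symm.continuous.comp_continuousOn h).congr fun x hx => ?_
  simp [← (hherm x hx).toEuclideanCLM_cfc hf]

theorem stmt8_general (N : ℕ) (a b : ℝ)
    (A A' : ℝ → Matrix (Fin N) (Fin N) ℂ)
    (hherm : ∀ t ∈ Set.Ioo a b, (A t).IsHermitian)
    (hA : ∀ t ∈ Set.Ioo a b, HasDerivAt A (A' t) t)
    (hA'cont : ContinuousOn A' (Set.Ioo a b))
    (φ : ℝ → ℝ) (hφ : ContDiff ℝ 1 φ) :
    (∀ t ∈ Set.Ioo a b,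
      HasDerivAt (fun s => (N : ℂ)⁻¹ * Matrix.trace (cfc φ (A s)))
        ((N : ℂ)⁻¹ * Matrix.trace (cfc (deriv φ) (A t) * A' t)) t) ∧
    ContinuousOn (fun t => (N : ℂ)⁻¹ * Matrix.trace (cfc (deriv φ) (A t) * A' t))
      (Set.Ioo a b) := by
  have hnhds : ∀ t ∈ Ioo a b, Ioo a b ∈ 𝓝 t := fun t ht => Ioo_mem_nhds ht.1 ht.2
  have hAcont : ContinuousOn A (Ioo a b) := fun t ht =>
    (hA t ht).continuousAt.continuousWithinAt
  refine ⟨fun t ht => ?_, ?_⟩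
  · exact (Matrix.hasDerivAt_trace_cfc (eventually_of_mem (hnhds t ht) hA)
      (eventually_of_mem (hnhds t ht) hherm) (hA'cont.continuousAt (hnhds t ht)) hφ).const_mul _
  · exact continuousOn_const.mul (continuous_id.matrix_trace.comp_continuousOn
      ((hAcont.matrix_cfc hherm (hφ.continuous_deriv le_rfl)).mul hA'cont))

/-- Let `A : I → M_N(ℂ)` be a `C¹` function on an open interval `I = (a,b)`
taking self-adjoint values, with derivative `A'`, and let `φ ∈ C¹(ℝ)`.  Then
`t ↦ tr_N[φ(A(t))]` is `C¹` on `I` with derivative `tr_N[φ'(A(t))·A'(t)]`, where `φ(A(t))` is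
defined via the continuous functional calculus and `tr_N` is the normalized trace. -/
theorem stmt8 (N : ℕ) (hN : 0 < N) (a b : ℝ)
    (A A' : ℝ → Matrix (Fin N) (Fin N) ℂ)
    (hherm : ∀ t ∈ Set.Ioo a b, (A t).IsHermitian)
    (hA : ∀ t ∈ Set.Ioo a b, HasDerivAt A (A' t) t)
    (hA'cont : ContinuousOn A' (Set.Ioo a b))
    (φ : ℝ → ℝ) (hφ : ContDiff ℝ 1 φ) :
    (∀ t ∈ Set.Ioo a b,
      HasDerivAt (fun s => (N : ℂ)⁻¹ * Matrix.trace (cfc φ (A s)))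
        ((N : ℂ)⁻¹ * Matrix.trace (cfc (deriv φ) (A t) * A' t)) t) ∧
    ContinuousOn (fun t => (N : ℂ)⁻¹ * Matrix.trace (cfc (deriv φ) (A t) * A' t))
      (Set.Ioo a b) :=
  stmt8_general N a b A A' hherm hA hA'cont φ hφ
end

section
/- Let A, B be normal elements of a C*-algebra (or normal N×N matrices). Then the Hausdorff distance between their spectra satisfies d_H(sp(A), sp(B)) ≤ ‖A - B‖. -/
/-!
For normal `b` the continuous functional calculus gives `‖(z - b)⁻¹‖ ≤ 1 / dist(z, sp b)`.
So if `dist(z, sp b) > ‖a - b‖`, then `z - a = (z - b)(1 - (z - b)⁻¹(a - b))` is invertible by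
the Neumann series, i.e. `z ∉ sp a`. Applying this in both directions bounds the Hausdorff
distance; matrices reduce to this via the spectrum-preserving star-algebra isomorphism with
operators on `ℂᴺ`.
-/

open Metric

theorem Units.isUnit_sub_of_norm_inv_mul_lt {R : Type*} [NormedRing R] [HasSummableGeomSeries R]
    (u : Rˣ) {t : R} (h : ‖(↑u⁻¹ : R)‖ * ‖t‖ < 1) : IsUnit ((u : R) - t) := by
  have hsmall : ‖(↑u⁻¹ : R) * t‖ < 1 := (norm_mul_le _ _).trans_lt h
  have hfactor : (u : R) * (1 - ↑u⁻¹ * t) = u - t := by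
    rw [mul_sub, mul_one, ← mul_assoc, Units.mul_inv, one_mul]
  exact hfactor ▸ u.isUnit.mul (Units.oneSub _ hsmall).isUnit

theorem IsStarNormal.norm_ringInverse_algebraMap_sub_le {A : Type*} [CStarAlgebra A] {b : A}
    [IsStarNormal b] {z : ℂ} (hz : 0 < infDist z (spectrum ℂ b)) :
    ‖Ring.inverse (algebraMap ℂ A z - b)‖ ≤ (infDist z (spectrum ℂ b))⁻¹ := by
  have hdist : ∀ x ∈ spectrum ℂ b, infDist z (spectrum ℂ b) ≤ ‖z - x‖ := fun x hx =>
    dist_eq_norm z x ▸ infDist_le_dist_of_mem hx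
  have hne : ∀ x ∈ spectrum ℂ b, z - x ≠ 0 := fun x hx h0 => by
    linarith [hdist x hx, norm_eq_zero.mpr h0]
  have hcfc : cfc (fun x : ℂ => z - x) b = algebraMap ℂ A z - b := by
    rw [cfc_sub (fun _ => z) (fun x => x) b, cfc_const z b, cfc_id' ℂ b]
  rw [← hcfc, ← cfc_inv _ b hne]
  refine norm_cfc_le (inv_nonneg.mpr hz.le) fun x hx => ?_
  rw [norm_inv]
  exact inv_anti₀ hz (hdist x hx)

theorem infDist_spectrum_le_norm_sub {A : Type*} [CStarAlgebra A] {a b : A} [IsStarNormal b]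
    {z : ℂ} (hz : z ∈ spectrum ℂ a) : infDist z (spectrum ℂ b) ≤ ‖a - b‖ := by
  by_contra! hlt
  set d := infDist z (spectrum ℂ b)
  have hd : 0 < d := (norm_nonneg _).trans_lt hlt
  have hzb : IsUnit (algebraMap ℂ A z - b) := by
    rw [← spectrum.notMem_iff]
    exact fun hmem => hd.ne' (infDist_zero_of_mem hmem)
  have hinv : ‖(↑hzb.unit⁻¹ : A)‖ ≤ d⁻¹ := by
    rw [← Ring.inverse_unit, IsUnit.unit_spec]
    exact IsStarNormal.norm_ringInverse_algebraMap_sub_le hd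
  have hsmall : ‖(↑hzb.unit⁻¹ : A)‖ * ‖a - b‖ < 1 :=
    calc ‖(↑hzb.unit⁻¹ : A)‖ * ‖a - b‖ ≤ d⁻¹ * ‖a - b‖ := by gcongr
      _ < d⁻¹ * d := by gcongr
      _ = 1 := inv_mul_cancel₀ hd.ne'
  have hza := Units.isUnit_sub_of_norm_inv_mul_lt hzb.unit hsmall
  rw [IsUnit.unit_spec, sub_sub_sub_cancel_right] at hza
  exact spectrum.mem_iff.mp hz hza

theorem hausdorffDist_spectrum_le_norm_sub {A : Type*} [CStarAlgebra A] (a b : A)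
    [IsStarNormal a] [IsStarNormal b] :
    hausdorffDist (spectrum ℂ a) (spectrum ℂ b) ≤ ‖a - b‖ :=
  hausdorffDist_le_of_infDist (norm_nonneg _) (fun _ hz => infDist_spectrum_le_norm_sub hz)
    fun _ hz => norm_sub_rev a b ▸ infDist_spectrum_le_norm_sub hz

/-- For normal `N×N` complex matrices `A, B`, the Hausdorff distance between
their spectra satisfies `d_H(sp(A), sp(B)) ≤ ‖A - B‖` (operator norm). -/
theorem stmt11 (N : ℕ) (A B : Matrix (Fin N) (Fin N) ℂ)
    (hA : IsStarNormal A) (hB : IsStarNormal B) :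
    Metric.hausdorffDist (spectrum ℂ A) (spectrum ℂ B) ≤
      ‖Matrix.toEuclideanCLM (𝕜 := ℂ) (A - B)‖ := by
  let e := Matrix.toEuclideanCLM (n := Fin N) (𝕜 := ℂ)
  rw [map_sub, ← AlgEquiv.spectrum_eq e A, ← AlgEquiv.spectrum_eq e B]
  exact hausdorffDist_spectrum_le_norm_sub (e A) (e B)
end
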